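/- Suppose Assumption 1 holds with constant ε ≥ 0, Assumption 3 holds with constant γ > 0, Assumption 4 holds, Condition 1 holds, and Condition 2 is violated: there exists j ∈ S such that H[Y | X_{{j}}] = H[Y | (ρ(Z), X_{{j}})] for every environment-partition function ρ. If ε < γ/(2(1 + 2λ)), then L̂(V ∪ {j}) < L̂(V); in particular there exists a feature mask Φ′ ≠ V with L̂(Φ′) < L̂(V), so the ZIN objective does not select exactly the invariant features. -/

import Mathlib

open MeasureTheory ProbabilityTheory
open scoped ENNReal

/-- `- log p` for `p ∈ [0, ∞]`, valued in `[0, ∞]`, with `- log 0 = ∞`. -/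
noncomputable def negLog (p : ℝ≥0∞) : ℝ≥0∞ :=
  if p = 0 then ⊤ else ENNReal.ofReal (-Real.log p.toReal)

/-- Conditional Shannon entropy `H[Y | W]` (natural logarithm) of a finite-valued random
variable `Y` given a finite-valued random variable `W`, under the measure `μ`. -/
noncomputable def condEnt {Ω 𝒴 𝒲 : Type*} [MeasurableSpace Ω] (μ : Measure Ω)
    [Fintype 𝒴] [Fintype 𝒲] (Y : Ω → 𝒴) (W : Ω → 𝒲) : ℝ :=
  ∑ w : 𝒲, ∑ y : 𝒴,
    -((μ {ω | Y ω = y ∧ W ω = w}).toReal *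
      Real.log ((μ {ω | Y ω = y ∧ W ω = w}).toReal / (μ {ω | W ω = w}).toReal))

/-- Shannon entropy `H[Y]` (natural logarithm) of a finite-valued random variable `Y`. -/
noncomputable def shEnt {Ω 𝒴 : Type*} [MeasurableSpace Ω] (μ : Measure Ω)
    [Fintype 𝒴] (Y : Ω → 𝒴) : ℝ :=
  ∑ y : 𝒴, -((μ {ω | Y ω = y}).toReal * Real.log (μ {ω | Y ω = y}).toReal)

/-- Expected cross-entropy risk `E[- log f(X)(Y)]` of a probabilistic classifier `f`,
valued in `[0, ∞]`. -/
noncomputable def ceRisk {Ω α 𝒴 : Type*} [MeasurableSpace Ω] (μ : Measure Ω)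
    [Fintype α] [Fintype 𝒴] (X : Ω → α) (Y : Ω → 𝒴) (f : α → PMF 𝒴) : ℝ≥0∞ :=
  ∑ x : α, ∑ y : 𝒴, μ {ω | X ω = x ∧ Y ω = y} * negLog (f x y)

/-- Environment-wise weighted cross-entropy risk `E[1{ρ(Z) = k} · (- log f(X)(Y))]`. -/
noncomputable def ceRiskW {Ω α 𝒴 𝒵 : Type*} [MeasurableSpace Ω] (μ : Measure Ω)
    [Fintype α] [Fintype 𝒴] {K : ℕ}
    (X : Ω → α) (Y : Ω → 𝒴) (Z : Ω → 𝒵) (ρ : 𝒵 → Fin K) (k : Fin K)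
    (f : α → PMF 𝒴) : ℝ≥0∞ :=
  ∑ x : α, ∑ y : 𝒴, μ {ω | ρ (Z ω) = k ∧ X ω = x ∧ Y ω = y} * negLog (f x y)

/-- The masked feature tuple `X_Φ = (X^j)_{j ∈ Φ}` of a feature vector `X`. -/
def maskFun {Ω 𝒳 : Type*} {d : ℕ} (X : Ω → Fin d → 𝒳) (Φ : Finset (Fin d)) :
    Ω → ({ j : Fin d // j ∈ Φ } → 𝒳) :=
  fun ω j => X ω j.1

/-- The ZIN objective `L̂(Φ)`: infimum over classifiers `f ∈ 𝓕 Φ` of the supremum over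
environment-partition functions `ρ : 𝒵 → Fin K` of the cross-entropy risk plus `λ` times the
invariance penalty. -/
noncomputable def Lhat {Ω 𝒳 𝒴 𝒵 : Type*} [MeasurableSpace Ω] (μ : Measure Ω)
    [Fintype 𝒳] [Fintype 𝒴] (K : ℕ) {d : ℕ}
    (X : Ω → Fin d → 𝒳) (Y : Ω → 𝒴) (Z : Ω → 𝒵)
    (𝓕 : Finset (Fin d) → Set ((Fin d → 𝒳) → PMF 𝒴)) (lam : ℝ)
    (Φ : Finset (Fin d)) : ℝ≥0∞ :=
  ⨅ f ∈ 𝓕 Φ, ⨆ ρ : 𝒵 → Fin K,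
    ceRisk μ X Y f + ENNReal.ofReal lam *
      ∑ k : Fin K, (ceRiskW μ X Y Z ρ k f - ⨅ g ∈ 𝓕 Φ, ceRiskW μ X Y Z ρ k g)

/-!
Gibbs' inequality bounds the cross-entropy risk of every classifier on a mask `Φ`, overall and
inside each environment `ρ(Z) = k`, from below by the corresponding conditional entropy; in
particular `L̂(V) ≥ H[Y | X_V]`. The mask `Φ' = V ∪ {j}` is invariant by Assumption 4, so the
environment-wise lower bounds add up to `H[Y | ρ(Z), X_Φ'] = H[Y | X_Φ']`: the penalty of an
`ε`-optimal classifier on `Φ'` is at most its excess risk `ε`, whence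
`L̂(Φ') ≤ H[Y | X_Φ'] + (1 + λ) ε`. Assumption 3 gives `H[Y | X_Φ'] ≤ H[Y | X_V] - γ`, and the
bound on `ε` gives `(1 + λ) ε < γ`.
-/

lemma neg_mul_log_div_nonneg {p q : ℝ} (hp : 0 ≤ p) (hpq : p ≤ q) :
    0 ≤ -(p * Real.log (p / q)) :=
  neg_nonneg.2 <| mul_nonpos_of_nonneg_of_nonpos hp <|
    Real.log_nonpos (div_nonneg hp (hp.trans hpq)) (div_le_one_of_le₀ hpq (hp.trans hpq))

theorem gibbs_inequality {ι : Type*} [Fintype ι] {p q : ι → ℝ} (hp : ∀ i, 0 ≤ p i)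
    (hq : ∀ i, 0 ≤ q i) (hq1 : ∑ i, q i ≤ 1) (hpq : ∀ i, 0 < p i → 0 < q i) :
    ∑ i, -(p i * Real.log (p i / ∑ j, p j)) ≤ ∑ i, p i * -Real.log (q i) := by
  set Q := ∑ j, p j
  have hQ : 0 ≤ Q := Finset.sum_nonneg fun j _ => hp j
  have key : ∀ i, -(p i * Real.log (p i / Q)) ≤ p i * -Real.log (q i) + (Q * q i - p i) := by
    intro i
    rcases (hp i).eq_or_lt with h0 | hpos
    · simp [← h0, mul_nonneg hQ (hq i)]
    have hqi := hpq i hpos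
    have hQpos : 0 < Q := hpos.trans_le (Finset.single_le_sum (fun j _ => hp j) (Finset.mem_univ i))
    have hlog := mul_le_mul_of_nonneg_left
      (Real.log_le_sub_one_of_pos (by positivity : 0 < Q * q i / p i)) hpos.le
    have hcancel : p i * (Q * q i / p i - 1) = Q * q i - p i := by field_simp
    rw [Real.log_div (by positivity) hpos.ne', Real.log_mul hQpos.ne' hqi.ne', hcancel] at hlog
    rw [Real.log_div hpos.ne' hQpos.ne']
    linarith
  calc ∑ i, -(p i * Real.log (p i / Q))
      ≤ ∑ i, (p i * -Real.log (q i) + (Q * q i - p i)) := Finset.sum_le_sum fun i _ => key i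
    _ = ∑ i, p i * -Real.log (q i) + Q * (∑ i, q i - 1) := by
        rw [Finset.sum_add_distrib, Finset.sum_sub_distrib, ← Finset.mul_sum]; ring
    _ ≤ ∑ i, p i * -Real.log (q i) := by
        nlinarith [mul_le_mul_of_nonneg_left hq1 hQ]

lemma PMF.sum_toReal {ι : Type*} [Fintype ι] (q : PMF ι) : ∑ i, (q i).toReal = 1 := by
  rw [← ENNReal.toReal_sum fun i _ => q.apply_ne_top i, ← tsum_fintype (L := .unconditional ι),
    q.tsum_coe, ENNReal.toReal_one]

lemma mul_negLog_eq_ofReal {a p : ℝ≥0∞} (ha : a ≠ ⊤) (hap : a ≠ 0 → p ≠ 0) :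
    a * negLog p = ENNReal.ofReal (a.toReal * -Real.log p.toReal) := by
  rcases eq_or_ne a 0 with rfl | ha0
  · simp
  rw [negLog, if_neg (hap ha0), ENNReal.ofReal_mul ENNReal.toReal_nonneg, ENNReal.ofReal_toReal ha]

theorem ofReal_entropy_le_sum_mul_negLog {ι : Type*} [Fintype ι] {a : ι → ℝ≥0∞}
    (ha : ∀ i, a i ≠ ⊤) (q : PMF ι) :
    ENNReal.ofReal (∑ i, -((a i).toReal * Real.log ((a i).toReal / (∑ j, a j).toReal))) ≤
      ∑ i, a i * negLog (q i) := by
  by_cases hsupp : ∃ i, a i ≠ 0 ∧ q i = 0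
  · obtain ⟨i, hai, hqi⟩ := hsupp
    calc _ ≤ a i * negLog (q i) := by simp [negLog, hqi, hai]
      _ ≤ ∑ i, a i * negLog (q i) :=
          Finset.single_le_sum (f := fun i => a i * negLog (q i)) (fun _ _ => bot_le)
            (Finset.mem_univ i)
  push Not at hsupp
  have hq1 : ∀ i, (q i).toReal ≤ 1 := fun i => ENNReal.toReal_le_of_le_ofReal zero_le_one
    (by simpa using q.coe_le_one i)
  rw [Finset.sum_congr rfl fun i _ => mul_negLog_eq_ofReal (ha i) (hsupp i),
    ← ENNReal.ofReal_sum_of_nonneg fun i _ => mul_nonneg ENNReal.toReal_nonneg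
      (neg_nonneg.2 (Real.log_nonpos ENNReal.toReal_nonneg (hq1 i))),
    ENNReal.toReal_sum fun i _ => ha i]
  refine ENNReal.ofReal_le_ofReal (gibbs_inequality (fun i => ENNReal.toReal_nonneg)
    (fun i => ENNReal.toReal_nonneg) q.sum_toReal.le fun i hi => ?_)
  exact ENNReal.toReal_pos (hsupp i (ENNReal.toReal_pos_iff.1 hi).1.ne') (q.apply_ne_top i)

section CrossEntropy

variable {Ω α 𝒴 𝒲 κ : Type*} [MeasurableSpace Ω] {μ : Measure Ω}

lemma measure_inter_preimage_finset [MeasurableSpace κ] [MeasurableSingletonClass κ]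
    {E : Ω → κ} (hE : Measurable E) (A : Set Ω) (s : Finset κ) :
    μ (A ∩ E ⁻¹' s) = ∑ k ∈ s, μ (A ∩ E ⁻¹' {k}) := by
  have h := sum_measure_preimage_singleton (μ := μ.restrict A) s
    fun k _ => hE (measurableSet_singleton k)
  simp only [Measure.restrict_apply (hE (measurableSet_singleton _)),
    Measure.restrict_apply (hE s.measurableSet), Set.inter_comm _ A] at h
  exact h.symm

lemma condEnt_nonneg [IsFiniteMeasure μ] [Fintype 𝒴] [Fintype 𝒲] (Y : Ω → 𝒴) (W : Ω → 𝒲) :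
    0 ≤ condEnt μ Y W :=
  Finset.sum_nonneg fun _ _ => Finset.sum_nonneg fun _ _ => neg_mul_log_div_nonneg
    ENNReal.toReal_nonneg (ENNReal.toReal_mono (measure_ne_top μ _) (measure_mono fun _ h => h.2))

variable [Fintype 𝒴] {Y : Ω → 𝒴}

theorem ofReal_condEnt_le_ceRisk [IsFiniteMeasure μ] [MeasurableSpace 𝒴]
    [MeasurableSingletonClass 𝒴] [Fintype 𝒲] (hY : Measurable Y)
    (W : Ω → 𝒲) (F : 𝒲 → PMF 𝒴) :
    ENNReal.ofReal (condEnt μ Y W) ≤ ceRisk μ W Y F := by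
  refine (ENNReal.ofReal_sum_of_nonneg fun w _ => Finset.sum_nonneg fun y _ =>
    neg_mul_log_div_nonneg ENNReal.toReal_nonneg (ENNReal.toReal_mono (measure_ne_top μ _)
      (measure_mono fun _ h => h.2))).le.trans (Finset.sum_le_sum fun w _ => ?_)
  have hfiber : μ {ω | W ω = w} = ∑ y, μ {ω | Y ω = y ∧ W ω = w} := by
    have h := measure_inter_preimage_finset (μ := μ) hY {ω | W ω = w} Finset.univ
    simp only [Finset.coe_univ, Set.preimage_univ, Set.inter_univ] at h
    rw [h]
    exact Finset.sum_congr rfl fun y _ => congrArg μ (Set.ext fun _ => and_comm)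
  have hcomm : ∀ y, {ω | W ω = w ∧ Y ω = y} = {ω | Y ω = y ∧ W ω = w} :=
    fun y => Set.ext fun _ => and_comm
  simp only [hfiber, hcomm]
  exact ofReal_entropy_le_sum_mul_negLog (fun y => measure_ne_top μ _) (F w)

theorem ceRisk_comp [Fintype α] [MeasurableSpace α] [MeasurableSingletonClass α] [Fintype 𝒲]
    {X : Ω → α} (hX : Measurable X) (g : α → 𝒲) (F : 𝒲 → PMF 𝒴) :
    ceRisk μ X Y (F ∘ g) = ceRisk μ (g ∘ X) Y F := by
  classical
  unfold ceRisk
  rw [← Finset.sum_fiberwise Finset.univ g]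
  refine Finset.sum_congr rfl fun w _ => ?_
  rw [Finset.sum_comm]
  refine Finset.sum_congr rfl fun y _ => ?_
  have h := measure_inter_preimage_finset (μ := μ) hX {ω | Y ω = y} {x | g x = w}
  have hset : {ω | Y ω = y} ∩ X ⁻¹' ↑(Finset.univ.filter fun x => g x = w) =
      {ω | (g ∘ X) ω = w ∧ Y ω = y} := by
    ext; simp [and_comm]
  rw [hset] at h
  rw [h, Finset.sum_mul]
  refine Finset.sum_congr rfl fun x hx => ?_
  rw [Function.comp_apply, (Finset.mem_filter.1 hx).2]
  exact congrArg (· * _) (congrArg μ (Set.ext fun _ => and_comm))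

lemma ceRiskW_eq_ceRisk_restrict [Fintype α] {𝒵 : Type*} {K : ℕ} (X : Ω → α) (Z : Ω → 𝒵)
    {ρ : 𝒵 → Fin K} {k : Fin K} (hk : MeasurableSet {ω | ρ (Z ω) = k}) (f : α → PMF 𝒴) :
    ceRiskW μ X Y Z ρ k f = ceRisk (μ.restrict {ω | ρ (Z ω) = k}) X Y f := by
  simp only [ceRiskW, ceRisk, Measure.restrict_apply' hk]
  exact Finset.sum_congr rfl fun x _ => Finset.sum_congr rfl fun y _ =>
    congrArg (· * _) (congrArg μ (Set.ext fun _ => and_comm))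

lemma sum_ceRiskW [Fintype α] {𝒵 : Type*} {K : ℕ} (X : Ω → α) {Z : Ω → 𝒵} {ρ : 𝒵 → Fin K}
    (hρZ : Measurable fun ω => ρ (Z ω)) (f : α → PMF 𝒴) :
    ∑ k, ceRiskW μ X Y Z ρ k f = ceRisk μ X Y f := by
  unfold ceRiskW ceRisk
  rw [Finset.sum_comm]
  refine Finset.sum_congr rfl fun x _ => ?_
  rw [Finset.sum_comm]
  refine Finset.sum_congr rfl fun y _ => ?_
  have h := measure_inter_preimage_finset (μ := μ) hρZ {ω | X ω = x ∧ Y ω = y} Finset.univ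
  simp only [Finset.coe_univ, Set.preimage_univ, Set.inter_univ] at h
  rw [← Finset.sum_mul, h]
  exact congrArg (· * _) (Finset.sum_congr rfl fun k _ =>
    congrArg μ (Set.ext fun _ => and_comm))

lemma sum_condEnt_restrict [Fintype 𝒲] [Fintype κ] [MeasurableSpace κ]
    [MeasurableSingletonClass κ] {E : Ω → κ} (hE : Measurable E) (Y : Ω → 𝒴) (W : Ω → 𝒲) :
    ∑ k, condEnt (μ.restrict {ω | E ω = k}) Y W = condEnt μ Y (fun ω => (E ω, W ω)) := by
  have hk : ∀ k, MeasurableSet {ω | E ω = k} := fun k => hE (measurableSet_singleton k)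
  simp only [condEnt, Fintype.sum_prod_type, Prod.mk.injEq, Measure.restrict_apply' (hk _)]
  refine Finset.sum_congr rfl fun k _ => Finset.sum_congr rfl fun w _ =>
    Finset.sum_congr rfl fun y _ => ?_
  have hjoint : {ω | Y ω = y ∧ W ω = w} ∩ {ω | E ω = k} = {ω | Y ω = y ∧ E ω = k ∧ W ω = w} :=
    Set.ext fun _ => ⟨fun ⟨⟨hy, hw⟩, hk⟩ => ⟨hy, hk, hw⟩, fun ⟨hy, hk, hw⟩ => ⟨⟨hy, hw⟩, hk⟩⟩
  have hcond : {ω | W ω = w} ∩ {ω | E ω = k} = {ω | E ω = k ∧ W ω = w} :=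
    Set.ext fun _ => and_comm
  rw [hjoint, hcond]

end CrossEntropy

section ZIN

variable {Ω 𝒳 𝒴 𝒵 : Type*} [MeasurableSpace Ω] {μ : Measure Ω} [IsFiniteMeasure μ]
  [Fintype 𝒳] [MeasurableSpace 𝒳] [MeasurableSingletonClass 𝒳]
  [Fintype 𝒴] [Nonempty 𝒴] [MeasurableSpace 𝒴] [MeasurableSingletonClass 𝒴]
  {d : ℕ} {X : Ω → Fin d → 𝒳} {Y : Ω → 𝒴} {Φ : Finset (Fin d)}

theorem ofReal_condEnt_maskFun_le_ceRisk (hX : Measurable X) (hY : Measurable Y)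
    {f : (Fin d → 𝒳) → PMF 𝒴} (hf : DependsOn f Φ) :
    ENNReal.ofReal (condEnt μ Y (maskFun X Φ)) ≤ ceRisk μ X Y f := by
  have : Nonempty (PMF 𝒴) := ⟨PMF.pure (Classical.arbitrary 𝒴)⟩
  obtain ⟨F, rfl⟩ := (Function.factorsThrough_iff (f := Φ.restrict) f).1
    fun x y h => hf fun j hj => congrFun h ⟨j, hj⟩
  rw [ceRisk_comp hX]
  exact ofReal_condEnt_le_ceRisk hY _ F

variable {Z : Ω → 𝒵} {K : ℕ} {𝓕 : Finset (Fin d) → Set ((Fin d → 𝒳) → PMF 𝒴)}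

theorem ofReal_condEnt_le_Lhat [NeZero K] (hX : Measurable X) (hY : Measurable Y)
    (h𝓕 : ∀ f ∈ 𝓕 Φ, DependsOn f Φ) (lam : ℝ) :
    ENNReal.ofReal (condEnt μ Y (maskFun X Φ)) ≤ Lhat μ K X Y Z 𝓕 lam Φ :=
  le_iInf₂ fun f hf => (ofReal_condEnt_maskFun_le_ceRisk hX hY (h𝓕 f hf)).trans <|
    le_self_add.trans (le_iSup_of_le (fun _ => 0) le_rfl)

variable [MeasurableSpace 𝒵] [MeasurableSingletonClass 𝒵] [Countable 𝒵]

theorem sum_ceRiskW_sub_iInf_le (hX : Measurable X) (hY : Measurable Y) (hZ : Measurable Z)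
    {𝓖 : Set ((Fin d → 𝒳) → PMF 𝒴)} (h𝓖 : ∀ g ∈ 𝓖, DependsOn g Φ) {ρ : 𝒵 → Fin K}
    (hinv : condEnt μ Y (maskFun X Φ) = condEnt μ Y (fun ω => (ρ (Z ω), maskFun X Φ ω)))
    {f : (Fin d → 𝒳) → PMF 𝒴} (hf : f ∈ 𝓖) :
    ∑ k, (ceRiskW μ X Y Z ρ k f - ⨅ g ∈ 𝓖, ceRiskW μ X Y Z ρ k g) ≤
      ceRisk μ X Y f - ENNReal.ofReal (condEnt μ Y (maskFun X Φ)) := by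
  have hρZ : Measurable fun ω => ρ (Z ω) := (measurable_of_countable ρ).comp hZ
  set b : Fin K → ℝ≥0∞ := fun k =>
    ENNReal.ofReal (condEnt (μ.restrict {ω | ρ (Z ω) = k}) Y (maskFun X Φ))
  have hb : ∀ k, ∀ g ∈ 𝓖, b k ≤ ceRiskW μ X Y Z ρ k g := fun k g hg => by
    rw [ceRiskW_eq_ceRisk_restrict X Z (hρZ (measurableSet_singleton k))]
    exact ofReal_condEnt_maskFun_le_ceRisk hX hY (h𝓖 g hg)
  have hsum_b : ∑ k, b k = ENNReal.ofReal (condEnt μ Y (maskFun X Φ)) := by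
    rw [← ENNReal.ofReal_sum_of_nonneg fun k _ => condEnt_nonneg _ _, sum_condEnt_restrict hρZ,
      hinv]
  calc ∑ k, (ceRiskW μ X Y Z ρ k f - ⨅ g ∈ 𝓖, ceRiskW μ X Y Z ρ k g)
      ≤ ∑ k, (ceRiskW μ X Y Z ρ k f - b k) :=
        Finset.sum_le_sum fun k _ => tsub_le_tsub_left (le_iInf₂ (hb k)) _
    _ ≤ ∑ k, ceRiskW μ X Y Z ρ k f - ∑ k, b k := by
        refine ENNReal.le_sub_of_add_le_right (hsum_b ▸ ENNReal.ofReal_ne_top) ?_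
        rw [← Finset.sum_add_distrib]
        exact Finset.sum_le_sum fun k _ => (tsub_add_cancel_of_le (hb k f hf)).le
    _ = ceRisk μ X Y f - ENNReal.ofReal (condEnt μ Y (maskFun X Φ)) := by
        rw [sum_ceRiskW X hρZ, hsum_b]

theorem Lhat_le_of_invariant (hX : Measurable X) (hY : Measurable Y) (hZ : Measurable Z)
    (h𝓕 : ∀ f ∈ 𝓕 Φ, DependsOn f Φ)
    (hinv : ∀ ρ : 𝒵 → Fin K,
      condEnt μ Y (maskFun X Φ) = condEnt μ Y (fun ω => (ρ (Z ω), maskFun X Φ ω)))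
    {lam ε : ℝ} (hlam : 0 ≤ lam) (hε : 0 ≤ ε) {f : (Fin d → 𝒳) → PMF 𝒴} (hf : f ∈ 𝓕 Φ)
    (hfR : ceRisk μ X Y f ≤ ENNReal.ofReal (condEnt μ Y (maskFun X Φ) + ε)) :
    Lhat μ K X Y Z 𝓕 lam Φ ≤ ENNReal.ofReal (condEnt μ Y (maskFun X Φ) + (1 + lam) * ε) := by
  set H := condEnt μ Y (maskFun X Φ)
  have hH : 0 ≤ H := condEnt_nonneg _ _
  refine (iInf₂_le f hf).trans (iSup_le fun ρ => ?_)
  have hpen : ∑ k, (ceRiskW μ X Y Z ρ k f - ⨅ g ∈ 𝓕 Φ, ceRiskW μ X Y Z ρ k g) ≤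
      ENNReal.ofReal ε :=
    calc _ ≤ ceRisk μ X Y f - ENNReal.ofReal H := sum_ceRiskW_sub_iInf_le hX hY hZ h𝓕 (hinv ρ) hf
      _ ≤ ENNReal.ofReal (H + ε) - ENNReal.ofReal H := tsub_le_tsub_right hfR _
      _ = ENNReal.ofReal ε := by
          rw [ENNReal.ofReal_add hH hε, ENNReal.add_sub_cancel_left ENNReal.ofReal_ne_top]
  calc _ ≤ ENNReal.ofReal (H + ε) + ENNReal.ofReal lam * ENNReal.ofReal ε := by gcongr
    _ = ENNReal.ofReal (H + (1 + lam) * ε) := by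
        rw [← ENNReal.ofReal_mul hlam, ← ENNReal.ofReal_add (by positivity) (by positivity)]
        ring_nf

end ZIN

theorem zin_fails_when_condition2_violated_general
    {Ω 𝒳 𝒴 𝒵 : Type*} [MeasurableSpace Ω] (μ : Measure Ω) [IsProbabilityMeasure μ]
    [Fintype 𝒳] [Fintype 𝒴] [Nonempty 𝒴] [Fintype 𝒵]
    [MeasurableSpace 𝒳] [MeasurableSingletonClass 𝒳]
    [MeasurableSpace 𝒴] [MeasurableSingletonClass 𝒴]
    [MeasurableSpace 𝒵] [MeasurableSingletonClass 𝒵]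
    {d : ℕ} (X : Ω → Fin d → 𝒳) (Y : Ω → 𝒴) (Z : Ω → 𝒵)
    (hX : Measurable X) (hY : Measurable Y) (hZ : Measurable Z)
    (V : Finset (Fin d)) {K : ℕ} (hK : 1 ≤ K)
    (𝓕 : Finset (Fin d) → Set ((Fin d → 𝒳) → PMF 𝒴))
    (h𝓕dep : ∀ Φ, ∀ f ∈ 𝓕 Φ, ∀ x x' : Fin d → 𝒳, (∀ j ∈ Φ, x j = x' j) → f x = f x')
    (lam ε γ : ℝ)
    (hlam0 : 0 ≤ lam) (hε0 : 0 ≤ ε)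
    -- Assumption 1
    (A1 : ∀ (Φ : Finset (Fin d)) (ρ : 𝒵 → Fin K),
      (∃ f ∈ 𝓕 Φ, ceRisk μ X Y f ≤ ENNReal.ofReal (condEnt μ Y (maskFun X Φ) + ε)) ∧
      (∃ g : Fin K → ((Fin d → 𝒳) → PMF 𝒴), (∀ k, g k ∈ 𝓕 Φ) ∧
        ∑ k : Fin K, ceRiskW μ X Y Z ρ k (g k) ≤
          ENNReal.ofReal (condEnt μ Y (fun ω => (ρ (Z ω), maskFun X Φ ω)) + ε)))
    -- Assumption 3
    (A3 : ∀ A B : Finset (Fin d), B.Nonempty → Disjoint A B →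
      condEnt μ Y (maskFun X (A ∪ B)) ≤ condEnt μ Y (maskFun X A) - γ)
    -- Assumption 4: invariance is preserved under concatenation
    (A4 : ∀ (A B : Finset (Fin d)) (ρ : 𝒵 → Fin K),
      condEnt μ Y (maskFun X A) = condEnt μ Y (fun ω => (ρ (Z ω), maskFun X A ω)) →
      condEnt μ Y (maskFun X B) = condEnt μ Y (fun ω => (ρ (Z ω), maskFun X B ω)) →
      condEnt μ Y (maskFun X (A ∪ B)) =
        condEnt μ Y (fun ω => (ρ (Z ω), maskFun X (A ∪ B) ω)))
    -- Condition 1: invariance preserving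
    (C1 : ∀ ρ : 𝒵 → Fin K,
      condEnt μ Y (fun ω => (ρ (Z ω), maskFun X V ω)) = condEnt μ Y (maskFun X V))
    -- Condition 2 is violated by the spurious feature `j`
    (j : Fin d) (hj : j ∉ V)
    (hjinv : ∀ ρ : 𝒵 → Fin K,
      condEnt μ Y (maskFun X {j}) =
        condEnt μ Y (fun ω => (ρ (Z ω), maskFun X {j} ω)))
    -- constraint on the constants
    (h1 : ε < γ / (2 * (1 + 2 * lam))) :
    Lhat μ K X Y Z 𝓕 lam (insert j V) < Lhat μ K X Y Z 𝓕 lam V ∧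
    ∃ Φ' : Finset (Fin d), Φ' ≠ V ∧
      Lhat μ K X Y Z 𝓕 lam Φ' < Lhat μ K X Y Z 𝓕 lam V := by
  have : NeZero K := ⟨by omega⟩
  have hdep : ∀ Φ, ∀ f ∈ 𝓕 Φ, DependsOn f Φ := fun Φ f hf _ _ => h𝓕dep Φ f hf _ _
  have hinv : ∀ ρ : 𝒵 → Fin K, condEnt μ Y (maskFun X (insert j V)) =
      condEnt μ Y (fun ω => (ρ (Z ω), maskFun X (insert j V) ω)) := fun ρ =>
    Finset.union_singleton j V ▸ A4 V {j} ρ (C1 ρ).symm (hjinv ρ)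
  have hgain : condEnt μ Y (maskFun X (insert j V)) ≤ condEnt μ Y (maskFun X V) - γ :=
    Finset.union_singleton j V ▸
      A3 V {j} (Finset.singleton_nonempty j) (Finset.disjoint_singleton_right.2 hj)
  have hεγ : (1 + lam) * ε < γ :=
    calc (1 + lam) * ε ≤ ε * (2 * (1 + 2 * lam)) := by nlinarith
      _ < γ := (lt_div_iff₀ (by positivity)).1 h1
  have hH' := condEnt_nonneg (μ := μ) Y (maskFun X (insert j V))
  obtain ⟨f, hf, hfR⟩ := (A1 (insert j V) fun _ => 0).1
  have hlt : Lhat μ K X Y Z 𝓕 lam (insert j V) < Lhat μ K X Y Z 𝓕 lam V :=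
    calc Lhat μ K X Y Z 𝓕 lam (insert j V)
        ≤ ENNReal.ofReal (condEnt μ Y (maskFun X (insert j V)) + (1 + lam) * ε) :=
          Lhat_le_of_invariant hX hY hZ (hdep _) hinv hlam0 hε0 hf hfR
      _ < ENNReal.ofReal (condEnt μ Y (maskFun X V)) :=
          (ENNReal.ofReal_lt_ofReal_iff_of_nonneg (by positivity)).2 (by linarith)
      _ ≤ Lhat μ K X Y Z 𝓕 lam V := ofReal_condEnt_le_Lhat hX hY (hdep V) lam
  exact ⟨hlt, insert j V, fun h => hj (h ▸ Finset.mem_insert_self j V), hlt⟩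

/-- **Proposition 2: violation of Condition 2 makes ZIN include a spurious feature.**
Under Assumptions 1, 3 and 4 and Condition 1, if some spurious feature `j ∉ V` satisfies the
invariance constraint for every environment partition, then for `ε < γ/(2(1 + 2λ))` one has
`L̂(V ∪ {j}) < L̂(V)`; in particular there exists `Φ' ≠ V` with `L̂(Φ') < L̂(V)`. -/
theorem zin_fails_when_condition2_violated
    {Ω 𝒳 𝒴 𝒵 : Type*} [MeasurableSpace Ω] (μ : Measure Ω) [IsProbabilityMeasure μ]
    [Fintype 𝒳] [Nonempty 𝒳] [Fintype 𝒴] [Nonempty 𝒴] [Fintype 𝒵] [Nonempty 𝒵]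
    [MeasurableSpace 𝒳] [MeasurableSingletonClass 𝒳]
    [MeasurableSpace 𝒴] [MeasurableSingletonClass 𝒴]
    [MeasurableSpace 𝒵] [MeasurableSingletonClass 𝒵]
    {d : ℕ} (X : Ω → Fin d → 𝒳) (Y : Ω → 𝒴) (Z : Ω → 𝒵)
    (hX : Measurable X) (hY : Measurable Y) (hZ : Measurable Z)
    (V : Finset (Fin d)) {K : ℕ} (hK : 1 ≤ K)
    (𝓕 : Finset (Fin d) → Set ((Fin d → 𝒳) → PMF 𝒴))
    (h𝓕ne : ∀ Φ, (𝓕 Φ).Nonempty)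
    (h𝓕dep : ∀ Φ, ∀ f ∈ 𝓕 Φ, ∀ x x' : Fin d → 𝒳, (∀ j ∈ Φ, x j = x' j) → f x = f x')
    (lam ε γ : ℝ)
    (hlam0 : 0 ≤ lam) (hε0 : 0 ≤ ε) (hγ0 : 0 < γ)
    -- Assumption 1
    (A1 : ∀ (Φ : Finset (Fin d)) (ρ : 𝒵 → Fin K),
      (∃ f ∈ 𝓕 Φ, ceRisk μ X Y f ≤ ENNReal.ofReal (condEnt μ Y (maskFun X Φ) + ε)) ∧
      (∃ g : Fin K → ((Fin d → 𝒳) → PMF 𝒴), (∀ k, g k ∈ 𝓕 Φ) ∧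
        ∑ k : Fin K, ceRiskW μ X Y Z ρ k (g k) ≤
          ENNReal.ofReal (condEnt μ Y (fun ω => (ρ (Z ω), maskFun X Φ ω)) + ε)))
    -- Assumption 3
    (A3 : ∀ A B : Finset (Fin d), B.Nonempty → Disjoint A B →
      condEnt μ Y (maskFun X (A ∪ B)) ≤ condEnt μ Y (maskFun X A) - γ)
    -- Assumption 4: invariance is preserved under concatenation
    (A4 : ∀ (A B : Finset (Fin d)) (ρ : 𝒵 → Fin K),
      condEnt μ Y (maskFun X A) = condEnt μ Y (fun ω => (ρ (Z ω), maskFun X A ω)) →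
      condEnt μ Y (maskFun X B) = condEnt μ Y (fun ω => (ρ (Z ω), maskFun X B ω)) →
      condEnt μ Y (maskFun X (A ∪ B)) =
        condEnt μ Y (fun ω => (ρ (Z ω), maskFun X (A ∪ B) ω)))
    -- Condition 1: invariance preserving
    (C1 : ∀ ρ : 𝒵 → Fin K,
      condEnt μ Y (fun ω => (ρ (Z ω), maskFun X V ω)) = condEnt μ Y (maskFun X V))
    -- Condition 2 is violated by the spurious feature `j`
    (j : Fin d) (hj : j ∉ V)
    (hjinv : ∀ ρ : 𝒵 → Fin K,
      condEnt μ Y (maskFun X {j}) =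
        condEnt μ Y (fun ω => (ρ (Z ω), maskFun X {j} ω)))
    -- constraint on the constants
    (h1 : ε < γ / (2 * (1 + 2 * lam))) :
    Lhat μ K X Y Z 𝓕 lam (insert j V) < Lhat μ K X Y Z 𝓕 lam V ∧
    ∃ Φ' : Finset (Fin d), Φ' ≠ V ∧
      Lhat μ K X Y Z 𝓕 lam Φ' < Lhat μ K X Y Z 𝓕 lam V :=
  zin_fails_when_condition2_violated_general μ X Y Z hX hY hZ V hK 𝓕 h𝓕dep lam ε γ hlam0 hε0 A1 A3
    A4 C1 j hj hjinv h1
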